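/- Let A(x) be the unique formal power series over ℚ with zero constant term and linear coefficient 1 satisfying A(A(x)) = x + 16x^2. Then 4^{n−1}·[x^n]A(x) ∈ ℤ for all n ≥ 1; moreover the first coefficients of the compositional fourth root, i.e., the series B with B(B(B(B(x)))) = x + 16x^2, B(0)=0 and [x^1]B = 1, are [x^2]B = 4 and [x^3]B = −48. -/

import Mathlib

/-!
Conjugating by `x ↦ 4x`, the series `F(x) = A(4x)/4` has coefficients `4^(n-1) [x^n] A` and
satisfies `F(F(x)) = x + 64x²`. Comparing coefficients of `F ∘ F` gives, for `n ≥ 2`,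
`2 f_n + ∑_{2 ≤ m < n} f_m [x^n] F^m ≡ 0 (mod 8)`. A strong induction on `n` shows that
`F^m ≡ x^m (mod 4)` coefficientwise for every `m`: the coefficient of `x^n` in `F^m`, `m ≥ 2`,
only involves coefficients of `F` below `n`, and once those are known every term of the sum is
`≡ 0 (mod 16)`, so `f_n ≡ 0 (mod 4)`. The coefficients of the fourth root come from comparing the
coefficients of `x²` and `x³` in the fourfold composite.
-/

open PowerSeries Finset

/-- Composition `G(A(x))` of formal power series, valid when `A` has zero
constant term. -/
noncomputable def PSComp (G A : PowerSeries ℚ) : PowerSeries ℚ :=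
  PowerSeries.mk fun n => ∑ m ∈ range (n + 1), coeff m G * coeff n (A ^ m)

theorem coeff_PSComp (G A : ℚ⟦X⟧) (n : ℕ) :
    coeff n (PSComp G A) = ∑ m ∈ range (n + 1), coeff m G * coeff n (A ^ m) :=
  coeff_mk _ _

section PowersOfOrderOne

variable {R : Type*} [CommRing R] {φ : R⟦X⟧}

theorem coeff_pow_of_lt (h0 : constantCoeff φ = 0) {m n : ℕ} (h : n < m) :
    coeff n (φ ^ m) = 0 :=
  X_pow_dvd_iff.1 (pow_dvd_pow_of_dvd (X_dvd_iff.2 h0) m) n h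

theorem coeff_pow_self (h0 : constantCoeff φ = 0) (n : ℕ) :
    coeff n (φ ^ n) = coeff 1 φ ^ n := by
  obtain ⟨ψ, rfl⟩ := X_dvd_iff.2 h0
  rw [mul_pow, coeff_X_pow_mul', if_pos le_rfl, Nat.sub_self, coeff_zero_eq_constantCoeff,
    map_pow, coeff_succ_X_mul, coeff_zero_eq_constantCoeff]

end PowersOfOrderOne

theorem PSComp_C_inv_mul_rescale {c : ℚ} (hc : c ≠ 0) (G A : ℚ⟦X⟧) :
    PSComp (C c⁻¹ * rescale c G) (C c⁻¹ * rescale c A) = C c⁻¹ * rescale c (PSComp G A) := by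
  ext n
  simp only [coeff_PSComp, coeff_C_mul, coeff_rescale, mul_pow, ← map_pow, Finset.mul_sum]
  refine Finset.sum_congr rfl fun m _ => ?_
  have hcm : c ^ m * (c ^ m)⁻¹ = 1 := mul_inv_cancel₀ (pow_ne_zero m hc)
  linear_combination (c⁻¹ * c ^ n * coeff m G * coeff n (A ^ m)) * hcm

theorem coeff_PSComp_self {F : ℚ⟦X⟧} (h0 : constantCoeff F = 0) (h1 : coeff 1 F = 1) {n : ℕ}
    (hn : 2 ≤ n) :
    coeff n (PSComp F F) = 2 * coeff n F + ∑ m ∈ Ico 2 n, coeff m F * coeff n (F ^ m) := by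
  have hsplit : range (n + 1) = insert 0 (insert 1 (insert n (Ico 2 n))) := by
    ext x
    simp only [mem_range, mem_insert, mem_Ico]
    omega
  rw [coeff_PSComp, hsplit, sum_insert (by simp; omega), sum_insert (by simp; omega),
    sum_insert (by simp), coeff_zero_eq_constantCoeff, h0, coeff_pow_self h0, h1, pow_one, one_pow]
  ring

theorem AddCommGroup.ModEq.sum {ι M : Type*} [AddCommGroup M] {p : M} {s : Finset ι}
    {f g : ι → M} (h : ∀ i ∈ s, f i ≡ g i [PMOD p]) : ∑ i ∈ s, f i ≡ ∑ i ∈ s, g i [PMOD p] := by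
  induction s using Finset.cons_induction with
  | empty => exact AddCommGroup.modEq_rfl
  | cons a s ha ih =>
    rw [sum_cons, sum_cons]
    exact (h a (by simp)).add (ih fun i hi => h i (by simp [hi]))

section CongruencesInRings

open AddCommGroup

variable {R : Type*} [CommRing R]

theorem AddCommGroup.ModEq.mul_intCast {p a₀ b₀ : ℤ} {a b : R} (ha : a ≡ a₀ [PMOD (p : R)])
    (hb : b ≡ b₀ [PMOD (p : R)]) : a * b ≡ ((a₀ * b₀ : ℤ) : R) [PMOD (p : R)] := by
  obtain ⟨k, hk⟩ := modEq_iff_zsmul'.1 ha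
  obtain ⟨l, hl⟩ := modEq_iff_zsmul'.1 hb
  refine modEq_iff_zsmul'.2 ⟨k * b₀ + l * a₀ - k * l * p, ?_⟩
  rw [zsmul_eq_mul] at hk hl ⊢
  push_cast
  linear_combination ((b₀ : R) - l * p) * hk + a * hl

theorem mul_modEq_zero {a b p q : R} (ha : a ≡ 0 [PMOD p]) (hb : b ≡ 0 [PMOD q]) :
    a * b ≡ 0 [PMOD p * q] := by
  obtain ⟨k, rfl⟩ := modEq_zero_iff_eq_zsmul.1 ha
  obtain ⟨l, rfl⟩ := modEq_zero_iff_eq_zsmul.1 hb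
  exact modEq_zero_iff_eq_zsmul.2 ⟨k * l, by simp only [zsmul_eq_mul]; push_cast; ring⟩

end CongruencesInRings

section SquareRootModFour

open AddCommGroup

variable {F : ℚ⟦X⟧}

theorem coeff_pow_succ_modEq_of_forall_lt (h0 : constantCoeff F = 0) {n : ℕ}
    (ih : ∀ i < n, ∀ m, coeff i (F ^ m) ≡ ((coeff i (X ^ m : ℤ⟦X⟧) : ℤ) : ℚ) [PMOD 4])
    {k : ℕ} (hk : 1 ≤ k) :
    coeff n (F ^ (k + 1)) ≡ ((coeff n (X ^ (k + 1) : ℤ⟦X⟧) : ℤ) : ℚ) [PMOD 4] := by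
  rw [pow_succ', pow_succ', coeff_mul, coeff_mul, Int.cast_sum]
  refine ModEq.sum fun ⟨i, j⟩ hij => ?_
  rw [HasAntidiagonal.mem_antidiagonal] at hij
  rcases Nat.eq_zero_or_pos i with rfl | hi
  · simp [coeff_zero_eq_constantCoeff, h0]
  rcases Nat.eq_zero_or_pos j with rfl | hj
  · simp [coeff_pow_of_lt h0 hk, coeff_pow_of_lt (constantCoeff_X (R := ℤ)) hk]
  simpa using (ih i (by omega) 1).mul_intCast (ih j (by omega) k)

theorem coeff_modEq_zero_of_forall_lt (h0 : constantCoeff F = 0) (h1 : coeff 1 F = 1)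
    (hFF : ∀ n, 2 ≤ n → coeff n (PSComp F F) ≡ 0 [PMOD 8]) {n : ℕ} (hn : 2 ≤ n)
    (ih : ∀ i < n, ∀ m, coeff i (F ^ m) ≡ ((coeff i (X ^ m : ℤ⟦X⟧) : ℤ) : ℚ) [PMOD 4])
    (hpow : ∀ m, 2 ≤ m → coeff n (F ^ m) ≡ ((coeff n (X ^ m : ℤ⟦X⟧) : ℤ) : ℚ) [PMOD 4]) :
    coeff n F ≡ 0 [PMOD 4] := by
  have hS : ∑ m ∈ Ico 2 n, coeff m F * coeff n (F ^ m) ≡ ∑ m ∈ Ico 2 n, 0 [PMOD 8] := by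
    refine ModEq.sum fun m hm => ?_
    rw [mem_Ico] at hm
    have hFm : coeff m F ≡ 0 [PMOD 4] := by
      simpa [coeff_X, show m ≠ 1 by omega] using ih m hm.2 1
    have hFnm : coeff n (F ^ m) ≡ 0 [PMOD 4] := by
      simpa [coeff_X_pow, hm.2.ne'] using hpow m hm.1
    have h16 := mul_modEq_zero hFm hFnm
    rw [show (4 * 4 : ℚ) = (2 : ℤ) • 8 by norm_num] at h16
    exact h16.of_zsmul
  have h2F : 2 * coeff n F ≡ 2 * 0 [PMOD 8] := by
    have := coeff_PSComp_self h0 h1 hn ▸ hFF n hn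
    rw [← add_zero (0 : ℚ), ← sum_const_zero (s := Ico 2 n)] at this
    simpa using (hS.add_iff_right).1 this
  simpa [show (8 : ℚ) / 2 = 4 by norm_num] using (mul_modEq_mul_left two_ne_zero).1 h2F

theorem coeff_pow_modEq_four (h0 : constantCoeff F = 0) (h1 : coeff 1 F = 1)
    (hFF : ∀ n, 2 ≤ n → coeff n (PSComp F F) ≡ 0 [PMOD 8]) (n m : ℕ) :
    coeff n (F ^ m) ≡ ((coeff n (X ^ m : ℤ⟦X⟧) : ℤ) : ℚ) [PMOD 4] := by
  induction n using Nat.strong_induction_on generalizing m with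
  | _ n ih =>
  have hpow (m : ℕ) (hm : 2 ≤ m) :
      coeff n (F ^ m) ≡ ((coeff n (X ^ m : ℤ⟦X⟧) : ℤ) : ℚ) [PMOD 4] := by
    obtain ⟨k, rfl⟩ : ∃ k, m = k + 1 := ⟨m - 1, by omega⟩
    exact coeff_pow_succ_modEq_of_forall_lt h0 ih (by omega)
  match m, n with
  | 0, n => simp [coeff_one]
  | 1, 0 => simp [h0]
  | 1, 1 => simp [h1]
  | 1, n + 2 => simpa [coeff_X] using coeff_modEq_zero_of_forall_lt h0 h1 hFF (by omega) ih hpow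
  | m + 2, n => exact hpow (m + 2) (by omega)

end SquareRootModFour

theorem exists_int_eq_four_pow_mul_coeff {A : ℚ⟦X⟧} (hA0 : constantCoeff A = 0)
    (hA1 : coeff 1 A = 1) {c : ℤ} (hA : PSComp A A = X + C (2 * (c : ℚ)) * X ^ 2) (n : ℕ) :
    ∃ m : ℤ, (4 : ℚ) ^ n * coeff (n + 1) A = m := by
  set F := C (4 : ℚ)⁻¹ * rescale 4 A
  have hF (k : ℕ) : coeff k F = 4⁻¹ * 4 ^ k * coeff k A := by
    rw [coeff_C_mul, coeff_rescale, mul_assoc]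
  have hF0 : constantCoeff F = 0 := by
    rw [← coeff_zero_eq_constantCoeff_apply, hF, coeff_zero_eq_constantCoeff_apply, hA0, mul_zero]
  have hF1 : coeff 1 F = 1 := by rw [hF, hA1]; norm_num
  have hFF (k : ℕ) (hk : 2 ≤ k) : coeff k (PSComp F F) ≡ 0 [PMOD 8] := by
    rw [PSComp_C_inv_mul_rescale (by norm_num), hA]
    simp only [coeff_C_mul, coeff_rescale, map_add, coeff_X, coeff_X_pow,
      if_neg (by omega : k ≠ 1)]
    rcases hk.eq_or_lt with rfl | hk
    · exact AddCommGroup.modEq_zero_iff_eq_zsmul.2 ⟨c, by norm_num [zsmul_eq_mul]; ring⟩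
    · simp [hk.ne']
  obtain ⟨z, hz⟩ :=
    AddCommGroup.modEq_iff_eq_add_zsmul.1 (coeff_pow_modEq_four hF0 hF1 hFF (n + 1) 1)
  refine ⟨coeff (n + 1) (X : ℤ⟦X⟧) - z * 4, ?_⟩
  simp only [pow_one, hF, zsmul_eq_mul] at hz
  push_cast
  linear_combination -hz

section LowCoefficients

variable (G A : ℚ⟦X⟧)

theorem constantCoeff_PSComp : constantCoeff (PSComp G A) = constantCoeff G := by
  rw [← coeff_zero_eq_constantCoeff_apply, coeff_PSComp]
  simp

theorem coeff_one_PSComp : coeff 1 (PSComp G A) = coeff 1 G * coeff 1 A := by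
  simp [coeff_PSComp, sum_range_succ]

theorem coeff_two_PSComp (hA0 : constantCoeff A = 0) :
    coeff 2 (PSComp G A) = coeff 1 G * coeff 2 A + coeff 2 G * coeff 1 A ^ 2 := by
  obtain ⟨ψ, rfl⟩ := X_dvd_iff.2 hA0
  simp [coeff_PSComp, sum_range_succ, mul_pow, coeff_X_pow_mul', coeff_succ_X_mul]

theorem coeff_three_PSComp (hA0 : constantCoeff A = 0) :
    coeff 3 (PSComp G A) = coeff 1 G * coeff 3 A + 2 * coeff 2 G * coeff 1 A * coeff 2 A
      + coeff 3 G * coeff 1 A ^ 3 := by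
  obtain ⟨ψ, rfl⟩ := X_dvd_iff.2 hA0
  simp [coeff_PSComp, sum_range_succ, mul_pow, coeff_X_pow_mul', coeff_succ_X_mul, coeff_one_pow]
  ring

end LowCoefficients

theorem coeff_two_three_of_PSComp_four {B : ℚ⟦X⟧} (hB0 : constantCoeff B = 0)
    (hB1 : coeff 1 B = 1) (hB : PSComp B (PSComp B (PSComp B B)) = X + C 16 * X ^ 2) :
    coeff 2 B = 4 ∧ coeff 3 B = -48 := by
  have h2 := congrArg (coeff 2) hB
  have h3 := congrArg (coeff 3) hB
  simp only [constantCoeff_PSComp, hB0, coeff_two_PSComp, hB1, one_mul, one_pow, mul_one,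
    coeff_one_PSComp, map_add, coeff_X, OfNat.ofNat_ne_one, ↓reduceIte, coeff_C_mul, coeff_X_pow,
    zero_add, coeff_three_PSComp, Nat.succ_ne_self, mul_zero, add_zero] at h2 h3
  have hb2 : coeff 2 B = 4 := by linarith
  refine ⟨hb2, ?_⟩
  rw [hb2] at h3
  linarith

theorem stmt_14 (A : PowerSeries ℚ) (hA0 : constantCoeff A = 0)
    (hA1 : coeff 1 A = 1) (hA : PSComp A A = X + C 16 * X ^ 2)
    (B : PowerSeries ℚ) (hB0 : constantCoeff B = 0) (hB1 : coeff 1 B = 1)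
    (hB : PSComp B (PSComp B (PSComp B B)) = X + C 16 * X ^ 2) :
    (∀ n, 1 ≤ n → ∃ m : ℤ, (4 : ℚ) ^ (n - 1) * coeff n A = m) ∧
      coeff 2 B = 4 ∧ coeff 3 B = -48 := by
  refine ⟨fun n hn => ?_, coeff_two_three_of_PSComp_four hB0 hB1 hB⟩
  obtain ⟨k, rfl⟩ : ∃ k, n = k + 1 := ⟨n - 1, by omega⟩
  have hA' : PSComp A A = X + C (2 * ((8 : ℤ) : ℚ)) * X ^ 2 := by rw [hA]; norm_num
  simpa using exists_int_eq_four_pow_mul_coeff hA0 hA1 hA' k
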